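/- arXiv:1709.04958 — 7 statements merged into one kernel-verified Lean document; each statement's English description precedes it below -/
import Mathlib

section
/- Let H be the 8-vertex graph with vertices a1,a2,a3,a4,b1,b2,b3,b4, outer 4-cycle a1a2a3a4, inner 4-cycle b1b2b3b4, and spoke edges a_i b_i and b_i a_{i+1 mod 4} for all i. There is no proper coloring c of H with colors in {1,2,3,4} such that c(a_i) ≤ 3 for all i, c(b_j) ≤ 3 for j ∈ {1,2,3}, and on every triangle of the form {a_i, b_i, a_{i+1}} or {b_i, a_{i+1}, b_{i+1}} (indices mod 4) and on the quadrilateral {b1,b2,b3,b4} the maximum of c over the face is attained at exactly one vertex. -/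
/-- The maximum of three values is attained at exactly one of them. -/
def UM3 (x y z : ℕ) : Prop :=
  (y < x ∧ z < x) ∨ (x < y ∧ z < y) ∨ (x < z ∧ y < z)

/-- The maximum of four values is attained at exactly one of them. -/
def UM4 (w x y z : ℕ) : Prop :=
  (x < w ∧ y < w ∧ z < w) ∨ (w < x ∧ y < x ∧ z < x) ∨
  (w < y ∧ x < y ∧ z < y) ∨ (w < z ∧ x < z ∧ y < z)

/-- There is no proper coloring of the gadget `H` with colors in `{1,2,3,4}`,
where all `a i` and `b 0, b 1, b 2` get colors in `{1,2,3}` (only `b 3` may get `4`),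
such that every triangle `{a i, b i, a (i+1)}`, `{b i, a (i+1), b (i+1)}`
and the quadrilateral `{b 0, b 1, b 2, b 3}` has the unique-maximum property. -/
theorem stmt_0 :
    ¬ ∃ a b : Fin 4 → ℕ,
      (∀ i, 1 ≤ a i ∧ a i ≤ 3) ∧
      (∀ i, 1 ≤ b i ∧ b i ≤ 4) ∧
      b 0 ≤ 3 ∧ b 1 ≤ 3 ∧ b 2 ≤ 3 ∧
      (∀ i, a i ≠ a (i + 1)) ∧
      (∀ i, b i ≠ b (i + 1)) ∧
      (∀ i, a i ≠ b i) ∧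
      (∀ i, b i ≠ a (i + 1)) ∧
      (∀ i, UM3 (a i) (b i) (a (i + 1))) ∧
      (∀ i, UM3 (b i) (a (i + 1)) (b (i + 1))) ∧
      UM4 (b 0) (b 1) (b 2) (b 3) := by
  rintro ⟨a, b, ha, hb, h0, h1, h2, haa, hbb, hab, hba, hT1, hT2, hQ⟩
  have e0 : (0 : Fin 4) + 1 = 1 := by decide
  have e1 : (1 : Fin 4) + 1 = 2 := by decide
  have e2 : (2 : Fin 4) + 1 = 3 := by decide
  have e3 : (3 : Fin 4) + 1 = 0 := by decide
  have ha0 := ha 0; have ha1 := ha 1; have ha2 := ha 2; have ha3 := ha 3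
  have hb0 := hb 0; have hb1 := hb 1; have hb2 := hb 2; have hb3 := hb 3
  have q0 := haa 0; have q1 := haa 1; have q2 := haa 2; have q3 := haa 3
  have r0 := hbb 0; have r1 := hbb 1; have r2 := hbb 2; have r3 := hbb 3
  have s0 := hab 0; have s1 := hab 1; have s2 := hab 2; have s3 := hab 3
  have t0 := hba 0; have t1 := hba 1; have t2 := hba 2; have t3 := hba 3
  rw [e0] at q0 r0 t0
  rw [e1] at q1 r1 t1
  rw [e2] at q2 r2 t2
  rw [e3] at q3 r3 t3
  have hT10 := hT1 0; have hT11 := hT1 1; have hT12 := hT1 2; have hT13 := hT1 3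
  have hT20 := hT2 0; have hT21 := hT2 1; have hT22 := hT2 2; have hT23 := hT2 3
  rw [e0] at hT10 hT20
  rw [e1] at hT11 hT21
  rw [e2] at hT12 hT22
  rw [e3] at hT13 hT23
  simp only [UM3, UM4] at hT10 hT11 hT12 hT13 hT20 hT21 hT22 hT23 hQ
  omega
end

section
/- Let G be the 17-vertex plane graph consisting of two disjoint copies H and H' of the graph on vertices a1,...,a4,b1,...,b4 (outer cycle a1a2a3a4, inner cycle b1b2b3b4, edges a_i b_i and b_i a_{i+1} mod 4), joined by the single edge a4 a2'. Then there is no proper coloring of G with colors in {1,2,3,4} such that every face of G (all bounded faces of both copies, and the outer face whose boundary vertices are a1,a2,a3,a4,a1',a2',a3',a4') has the unique-maximum property. In particular, the facial unique-maximum chromatic number of G is at least 5. -/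
/-- The maximum of a list of values is attained at exactly one position. -/
def UMList (l : List ℕ) : Prop :=
  (l.filter fun v => decide (∀ w ∈ l, w ≤ v)).length = 1

/-- The bounded faces of one copy of the gadget `H` (on `a`-vertices and `b`-vertices)
all have the unique-maximum property, and the coloring is proper on `H`. -/
def GadgetOK (a b : Fin 4 → ℕ) : Prop :=
  (∀ i, a i ≠ a (i + 1)) ∧ (∀ i, b i ≠ b (i + 1)) ∧
  (∀ i, a i ≠ b i) ∧ (∀ i, b i ≠ a (i + 1)) ∧
  (∀ i, UM3 (a i) (b i) (a (i + 1))) ∧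
  (∀ i, UM3 (b i) (a (i + 1)) (b (i + 1))) ∧
  UM4 (b 0) (b 1) (b 2) (b 3)

def gOK (a b : Fin 4 → Fin 4) : Prop :=
  (∀ i, a i ≠ a (i + 1)) ∧ (∀ i, b i ≠ b (i + 1)) ∧
  (∀ i, a i ≠ b i) ∧ (∀ i, b i ≠ a (i + 1)) ∧
  (∀ i, (b i < a i ∧ a (i+1) < a i) ∨ (a i < b i ∧ a (i+1) < b i) ∨ (a i < a (i+1) ∧ b i < a (i+1))) ∧
  (∀ i, (a (i+1) < b i ∧ b (i+1) < b i) ∨ (b i < a (i+1) ∧ b (i+1) < a (i+1)) ∨ (b i < b (i+1) ∧ a (i+1) < b (i+1))) ∧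
  ((b 1 < b 0 ∧ b 2 < b 0 ∧ b 3 < b 0) ∨ (b 0 < b 1 ∧ b 2 < b 1 ∧ b 3 < b 1) ∨
   (b 0 < b 2 ∧ b 1 < b 2 ∧ b 3 < b 2) ∨ (b 0 < b 3 ∧ b 1 < b 3 ∧ b 2 < b 3))

instance (a b : Fin 4 → Fin 4) : Decidable (gOK a b) := by
  unfold gOK; infer_instance

set_option maxRecDepth 100000 in
set_option maxHeartbeats 4000000 in
theorem keyFin : ∀ a b : Fin 4 → Fin 4, gOK a b → ∃ i, a i = 3 := by decide

/-- In any valid gadget coloring with colors in {1,…,4}, color 4 appears on the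
outer `a`-cycle. -/
theorem gadget_has_four (a b : Fin 4 → ℕ)
    (ha : ∀ i, 1 ≤ a i ∧ a i ≤ 4) (hb : ∀ i, 1 ≤ b i ∧ b i ≤ 4)
    (hg : GadgetOK a b) : ∃ i, a i = 4 := by
  set A : Fin 4 → Fin 4 := fun i => ⟨a i - 1, by have := ha i; omega⟩ with hA
  set B : Fin 4 → Fin 4 := fun i => ⟨b i - 1, by have := hb i; omega⟩ with hB
  obtain ⟨h1, h2, h3, h4, h5, h6, h7⟩ := hg
  have hg' : gOK A B := by
    refine ⟨?_, ?_, ?_, ?_, ?_, ?_, ?_⟩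
    · intro i
      have := h1 i; have := ha i; have := ha (i+1)
      simp only [hA, Ne, Fin.ext_iff]; omega
    · intro i
      have := h2 i; have := hb i; have := hb (i+1)
      simp only [hB, Ne, Fin.ext_iff]; omega
    · intro i
      have := h3 i; have := ha i; have := hb i
      simp only [hA, hB, Ne, Fin.ext_iff]; omega
    · intro i
      have := h4 i; have := hb i; have := ha (i+1)
      simp only [hA, hB, Ne, Fin.ext_iff]; omega
    · intro i
      have := h5 i; have := ha i; have := hb i; have := ha (i+1)
      simp only [UM3] at *
      simp only [hA, hB, Fin.lt_def]; omega
    · intro i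
      have := h6 i; have := hb i; have := ha (i+1); have := hb (i+1)
      simp only [UM3] at *
      simp only [hA, hB, Fin.lt_def]; omega
    · have := hb 0; have := hb 1; have := hb 2; have := hb 3
      simp only [UM4] at h7
      simp only [hB, Fin.lt_def]; omega
  obtain ⟨i, hi⟩ := keyFin A B hg'
  refine ⟨i, ?_⟩
  have : a i - 1 = 3 := congrArg Fin.val hi
  have := ha i; omega

/-- The graph `G`, made of two copies of the gadget `H` joined by the edge `a 3 — a' 1`,
has no proper coloring with colors in `{1,2,3,4}` in which every face (all bounded faces
of both copies and the outer face bounded by `a 0, …, a 3, a' 0, …, a' 3`) has the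
unique-maximum property. -/
theorem stmt_3 :
    ¬ ∃ a b a' b' : Fin 4 → ℕ,
      (∀ i, 1 ≤ a i ∧ a i ≤ 4) ∧ (∀ i, 1 ≤ b i ∧ b i ≤ 4) ∧
      (∀ i, 1 ≤ a' i ∧ a' i ≤ 4) ∧ (∀ i, 1 ≤ b' i ∧ b' i ≤ 4) ∧
      GadgetOK a b ∧ GadgetOK a' b' ∧
      a 3 ≠ a' 1 ∧
      UMList [a 0, a 1, a 2, a 3, a' 0, a' 1, a' 2, a' 3] := by
  rintro ⟨a, b, a', b', ha, hb, ha', hb', hg, hg', -, hum⟩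
  obtain ⟨i, hi⟩ := gadget_has_four a b ha hb hg
  obtain ⟨j, hj⟩ := gadget_has_four a' b' ha' hb' hg'
  set l : List ℕ := [a 0, a 1, a 2, a 3, a' 0, a' 1, a' 2, a' 3] with hl
  have hall : ∀ w ∈ l, w ≤ 4 := by
    intro w hw
    simp only [hl, List.mem_cons, List.not_mem_nil, or_false] at hw
    rcases hw with rfl | rfl | rfl | rfl | rfl | rfl | rfl | rfl
    · exact (ha 0).2
    · exact (ha 1).2
    · exact (ha 2).2
    · exact (ha 3).2
    · exact (ha' 0).2
    · exact (ha' 1).2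
    · exact (ha' 2).2
    · exact (ha' 3).2
  have hp : (fun v => decide (∀ w ∈ l, w ≤ v)) 4 = true := by
    simpa using hall
  have hmem1 : (4 : ℕ) ∈ [a 0, a 1, a 2, a 3] := by
    fin_cases i <;> simp_all
  have hmem2 : (4 : ℕ) ∈ [a' 0, a' 1, a' 2, a' 3] := by
    fin_cases j <;> simp_all
  have hsplit : l = [a 0, a 1, a 2, a 3] ++ [a' 0, a' 1, a' 2, a' 3] := rfl
  unfold UMList at hum
  rw [hsplit] at hum hp
  rw [List.filter_append, List.length_append] at hum
  have h1 : (4 : ℕ) ∈ ([a 0, a 1, a 2, a 3].filter fun v =>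
      decide (∀ w ∈ [a 0, a 1, a 2, a 3] ++ [a' 0, a' 1, a' 2, a' 3], w ≤ v)) :=
    List.mem_filter.2 ⟨hmem1, hp⟩
  have h2 : (4 : ℕ) ∈ ([a' 0, a' 1, a' 2, a' 3].filter fun v =>
      decide (∀ w ∈ [a 0, a 1, a 2, a 3] ++ [a' 0, a' 1, a' 2, a' 3], w ≤ v)) :=
    List.mem_filter.2 ⟨hmem2, hp⟩
  have := List.length_pos_iff.2 (List.ne_nil_of_mem h1)
  have := List.length_pos_iff.2 (List.ne_nil_of_mem h2)
  omega
end

section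
/- For every k ≥ 1, let H_k be the graph on 6k+2 vertices a_1,...,a_{3k+1}, b_1,...,b_{3k+1} with edges forming the outer cycle a_1 a_2 ... a_{3k+1}, the inner cycle b_1 b_2 ... b_{3k+1}, and edges a_i b_i and b_i a_{i+1} for all i (indices mod 3k+1). Then every proper coloring c of H_k with colors in {1,2,3,4} such that all bounded faces (the 2(3k+1) triangles {a_i, b_i, a_{i+1}} and {b_i, a_{i+1}, b_{i+1}}, and the inner face {b_1,...,b_{3k+1}}) have the unique-maximum property must assign color 4 to some vertex a_i of the outer cycle. -/
open Fin.NatCast Fin.CommRing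

namespace TriangleStrip

variable (a b : ℕ → ℕ) (ha : ∀ m, 1 ≤ a m ∧ a m ≤ 3)
  (paa : ∀ m, a m ≠ a (m + 1)) (pbb : ∀ m, b m ≠ b (m + 1))
  (pab : ∀ m, a m ≠ b m) (pba : ∀ m, b m ≠ a (m + 1))
include ha paa pbb pab pba

theorem apply_add_three_eq_apply (j : ℕ)
    (hb : ∀ m, j ≤ m → m < j + 3 → 1 ≤ b m ∧ b m ≤ 3) :
    a (j + 3) = a j := by
  have rainbow : ∀ m, j ≤ m → m < j + 3 → a m + b m + a (m + 1) = 6 := fun m h₁ h₂ => by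
    have := ha m; have := ha (m + 1); have := hb m h₁ h₂
    have := paa m; have := pab m; have := pba m
    omega
  have skip : ∀ m, j ≤ m → m + 1 < j + 3 → a m ≠ a (m + 2) := fun m h₁ h₂ => by
    have := rainbow m h₁ (by omega)
    have : a (m + 1) + b (m + 1) + a (m + 2) = 6 := rainbow (m + 1) (by omega) h₂
    have := pbb m
    omega
  have := skip j le_rfl (by omega)
  have : a (j + 1) ≠ a (j + 3) := skip (j + 1) (by omega) (by omega)
  have : a j ≠ a (j + 1) := paa j
  have : a (j + 1) ≠ a (j + 2) := paa (j + 1)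
  have : a (j + 2) ≠ a (j + 3) := paa (j + 2)
  have := ha j; have := ha (j + 1); have := ha (j + 2); have := ha (j + 3)
  omega

theorem apply_three_mul_eq_apply_zero (s : ℕ) (hb : ∀ m < 3 * s, 1 ≤ b m ∧ b m ≤ 3) :
    a (3 * s) = a 0 := by
  induction s with
  | zero => rfl
  | succ s ih =>
    rw [← ih fun m hm => hb m (by omega), mul_add_one]
    exact apply_add_three_eq_apply a b ha paa pbb pab pba (3 * s) fun m _ hm => hb m (by omega)

end TriangleStrip

theorem exists_forall_ne_lt_of_card_argmax_eq_one {ι α : Type*} [Fintype ι] [LinearOrder α]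
    {b : ι → α} [DecidablePred fun i => ∀ j, b j ≤ b i]
    (h : (Finset.univ.filter fun i => ∀ j, b j ≤ b i).card = 1) :
    ∃ x, ∀ j, j ≠ x → b j < b x := by
  obtain ⟨x, hx⟩ := Finset.card_eq_one.mp h
  have hxmax : ∀ j, b j ≤ b x := by
    simpa using (Finset.ext_iff.mp hx x).mpr (Finset.mem_singleton_self x)
  refine ⟨x, fun j hjx => (hxmax j).lt_of_ne fun hj => hjx ?_⟩
  simpa using (Finset.ext_iff.mp hx j).mp (by simpa [hj] using hxmax)

theorem Fin.add_one_add_natCast_ne_self {n : ℕ} (x : Fin (n + 1)) {m : ℕ} (hm : m < n) :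
    x + 1 + (m : Fin (n + 1)) ≠ x := by
  intro h
  have h0 : ((m + 1 : ℕ) : Fin (n + 1)) = 0 := by
    rw [Nat.cast_succ]
    exact (add_comm _ _).trans (add_eq_left.mp ((add_assoc x 1 _).symm.trans h))
  have := Nat.le_of_dvd (by omega) (Fin.natCast_eq_zero.mp h0)
  omega

theorem stmt_4_general (k : ℕ) (a b : Fin (3 * k + 1) → ℕ)
    (ha : ∀ i, 1 ≤ a i ∧ a i ≤ 4) (hb : ∀ i, 1 ≤ b i ∧ b i ≤ 4)
    (paa : ∀ i, a i ≠ a (i + 1)) (pbb : ∀ i, b i ≠ b (i + 1))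
    (pab : ∀ i, a i ≠ b i) (pba : ∀ i, b i ≠ a (i + 1))
    (inner : (Finset.univ.filter fun i => ∀ j, b j ≤ b i).card = 1) :
    ∃ i, a i = 4 := by
  by_contra! hno4
  obtain ⟨x, hx⟩ := exists_forall_ne_lt_of_card_argmax_eq_one inner
  let v : ℕ → Fin (3 * k + 1) := fun m => x + 1 + m
  have hv : ∀ m, v (m + 1) = v m + 1 := fun m => by simp only [v]; push_cast; ring
  have ha' : ∀ m, 1 ≤ a (v m) ∧ a (v m) ≤ 3 := fun m => by
    have := ha (v m); have := hno4 (v m); omega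
  have hb' : ∀ m < 3 * k, 1 ≤ b (v m) ∧ b (v m) ≤ 3 := fun m hm => by
    have := hx (v m) (Fin.add_one_add_natCast_ne_self x hm); have := hb (v m); have := hb x
    omega
  have hwalk : a (v (3 * k)) = a (v 0) :=
    TriangleStrip.apply_three_mul_eq_apply_zero (fun m => a (v m)) (fun m => b (v m)) ha'
      (fun m => by simpa [hv] using paa (v m)) (fun m => by simpa [hv] using pbb (v m))
      (fun m => pab (v m)) (fun m => by simpa [hv] using pba (v m)) k hb'
  have hv3k : v (3 * k) = x := by
    simp only [v]
    rw [add_assoc, add_comm 1, ← Nat.cast_succ, Fin.natCast_self, add_zero]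
  have hv0 : v 0 = x + 1 := by simp [v]
  rw [hv3k, hv0] at hwalk
  exact paa x hwalk

/-- In the generalized gadget `H k` (outer cycle `a`, inner cycle `b` on `3k+1` vertices,
with edges `a i — b i` and `b i — a (i+1)`), every proper coloring with colors in
`{1,2,3,4}` for which all bounded faces (all triangles and the inner face on the
`b`-vertices) have the unique-maximum property assigns color `4` to some outer
vertex `a i`. -/
theorem stmt_4 (k : ℕ) (hk : 1 ≤ k) (a b : Fin (3 * k + 1) → ℕ)
    (ha : ∀ i, 1 ≤ a i ∧ a i ≤ 4) (hb : ∀ i, 1 ≤ b i ∧ b i ≤ 4)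
    (paa : ∀ i, a i ≠ a (i + 1)) (pbb : ∀ i, b i ≠ b (i + 1))
    (pab : ∀ i, a i ≠ b i) (pba : ∀ i, b i ≠ a (i + 1))
    (tri1 : ∀ i, UM3 (a i) (b i) (a (i + 1)))
    (tri2 : ∀ i, UM3 (b i) (a (i + 1)) (b (i + 1)))
    (inner : (Finset.univ.filter fun i => ∀ j, b j ≤ b i).card = 1) :
    ∃ i, a i = 4 :=
  stmt_4_general k a b ha hb paa pbb pab pba inner
end

section
/- Let c : ℤ/(3k+1)ℤ × {0,1} → {1,2,3} be a coloring of the vertices a_i = (i,0) and b_i = (i,1) for i in ℤ/(3k+1)ℤ such that all of the following hold for every i: c(a_i) ≠ c(b_i), c(b_i) ≠ c(a_{i+1}), c(a_i) ≠ c(a_{i+1}), c(b_i) ≠ c(b_{i+1}), and in each triangle {a_i, b_i, a_{i+1}} and {b_i, a_{i+1}, b_{i+1}} the maximum color appears exactly once. Then all three vertices of each such triangle receive three distinct colors, and the color pattern along the sequence a_1, b_1, a_2, b_2, ... is periodic with period 3 in the index i; since 3 does not divide 3k+1, no such coloring c exists. -/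
theorem eq_of_ne_of_ne_of_le_three {x y u v : ℕ} (hx : 1 ≤ x ∧ x ≤ 3) (hy : 1 ≤ y ∧ y ≤ 3)
    (hu : 1 ≤ u ∧ u ≤ 3) (hv : 1 ≤ v ∧ v ≤ 3) (hxy : x ≠ y)
    (hux : u ≠ x) (huy : u ≠ y) (hvx : v ≠ x) (hvy : v ≠ y) : u = v := by
  omega

open Fin.CommRing in
theorem Fin.two_mul_add_one_nsmul_three (k : ℕ) : (2 * k + 1) • (3 : Fin (3 * k + 1)) = 1 := by
  have hzero : ((3 * k + 1 : ℕ) : Fin (3 * k + 1)) = 0 := Fin.natCast_self _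
  rw [nsmul_eq_mul]
  push_cast at hzero ⊢
  linear_combination 2 * hzero

open Fin.CommRing in
theorem Fin.add_three_eq_add_one_add_one_add_one {n : ℕ} [NeZero n] (i : Fin n) :
    i + 3 = i + 1 + 1 + 1 := by
  ring

/-- Proper colourings with colours `1, 2, 3` of the ring of triangles `{a i, b i, a (i+1)}`
and `{b i, a (i+1), b (i+1)}`. -/
structure IsProperRingColoring {n : ℕ} [NeZero n] (a b : Fin n → ℕ) : Prop where
  bound_a : ∀ i, 1 ≤ a i ∧ a i ≤ 3
  bound_b : ∀ i, 1 ≤ b i ∧ b i ≤ 3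
  ne_ab : ∀ i, a i ≠ b i
  ne_ba : ∀ i, b i ≠ a (i + 1)
  ne_aa : ∀ i, a i ≠ a (i + 1)
  ne_bb : ∀ i, b i ≠ b (i + 1)

namespace IsProperRingColoring

variable {n : ℕ} [NeZero n] {a b : Fin n → ℕ}

theorem b_add_one (h : IsProperRingColoring a b) (i : Fin n) : b (i + 1) = a i :=
  eq_of_ne_of_ne_of_le_three (h.bound_b i) (h.bound_a (i + 1)) (h.bound_b (i + 1))
    (h.bound_a i) (h.ne_ba i) (h.ne_bb i).symm (h.ne_ab (i + 1)).symm (h.ne_ab i) (h.ne_aa i)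

theorem a_add_one_add_one (h : IsProperRingColoring a b) (i : Fin n) : a (i + 1 + 1) = b i :=
  eq_of_ne_of_ne_of_le_three (h.bound_a (i + 1)) (h.bound_b (i + 1)) (h.bound_a (i + 1 + 1))
    (h.bound_b i) (h.ne_ab (i + 1)) (h.ne_aa (i + 1)).symm (h.ne_ba (i + 1)).symm
    (h.ne_ba i) (h.ne_bb i)

theorem periodic_a (h : IsProperRingColoring a b) : Function.Periodic a 3 := fun i => by
  rw [Fin.add_three_eq_add_one_add_one_add_one, h.a_add_one_add_one, h.b_add_one]

theorem periodic_b (h : IsProperRingColoring a b) : Function.Periodic b 3 := fun i => by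
  rw [Fin.add_three_eq_add_one_add_one_add_one, h.b_add_one, h.a_add_one_add_one]

end IsProperRingColoring

theorem not_isProperRingColoring {k : ℕ} (a b : Fin (3 * k + 1) → ℕ) :
    ¬ IsProperRingColoring a b := by
  intro h
  have hone : Function.Periodic a 1 := by
    simpa only [Fin.two_mul_add_one_nsmul_three] using h.periodic_a.nsmul (2 * k + 1)
  exact h.ne_aa 0 (hone 0).symm

theorem stmt_5_general (k : ℕ) (a b : Fin (3 * k + 1) → ℕ)
    (ha : ∀ i, 1 ≤ a i ∧ a i ≤ 3) (hb : ∀ i, 1 ≤ b i ∧ b i ≤ 3)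
    (pab : ∀ i, a i ≠ b i) (pba : ∀ i, b i ≠ a (i + 1))
    (paa : ∀ i, a i ≠ a (i + 1)) (pbb : ∀ i, b i ≠ b (i + 1)) :
    (∀ i, a i ≠ b i ∧ b i ≠ a (i + 1) ∧ a i ≠ a (i + 1) ∧
        b i ≠ b (i + 1) ∧ b i ≠ a (i + 1) ∧ a (i + 1) ≠ b (i + 1)) ∧
    (∀ i, a (i + 3) = a i ∧ b (i + 3) = b i) ∧
    False := by
  have h : IsProperRingColoring a b := ⟨ha, hb, pab, pba, paa, pbb⟩
  exact ⟨fun i => ⟨pab i, pba i, paa i, pbb i, pba i, pab (i + 1)⟩,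
    fun i => ⟨h.periodic_a i, h.periodic_b i⟩, not_isProperRingColoring a b h⟩

/-- For the ring of `3k+1` triangles (vertices `a i` and `b i`, indices cyclic),
any coloring with colors in `{1,2,3}` that is proper and gives every triangle
`{a i, b i, a (i+1)}` and `{b i, a (i+1), b (i+1)}` the unique-maximum property
makes every such triangle rainbow and is periodic with period `3` in the index;
since `3 ∤ 3k+1`, no such coloring exists. -/
theorem stmt_5 (k : ℕ) (hk : 1 ≤ k) (a b : Fin (3 * k + 1) → ℕ)
    (ha : ∀ i, 1 ≤ a i ∧ a i ≤ 3) (hb : ∀ i, 1 ≤ b i ∧ b i ≤ 3)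
    (pab : ∀ i, a i ≠ b i) (pba : ∀ i, b i ≠ a (i + 1))
    (paa : ∀ i, a i ≠ a (i + 1)) (pbb : ∀ i, b i ≠ b (i + 1))
    (tri1 : ∀ i, UM3 (a i) (b i) (a (i + 1)))
    (tri2 : ∀ i, UM3 (b i) (a (i + 1)) (b (i + 1))) :
    (∀ i, a i ≠ b i ∧ b i ≠ a (i + 1) ∧ a i ≠ a (i + 1) ∧
        b i ≠ b (i + 1) ∧ b i ≠ a (i + 1) ∧ a (i + 1) ≠ b (i + 1)) ∧
    (∀ i, a (i + 3) = a i ∧ b (i + 3) = b i) ∧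
    False :=
  stmt_5_general k a b ha hb pab pba paa pbb
end

section
/- Let H be the 8-vertex graph on a1,...,a4,b1,...,b4 as in the standard construction. If c is a proper coloring of H with colors in {1,2,3,4} in which every bounded face of H has the unique-maximum property, then some vertex on the outer face of H (i.e., some a_i) receives color 4. -/
set_option maxHeartbeats 1000000 in
/-- In every proper coloring of the gadget `H` with colors in `{1,2,3,4}` in which every
bounded face has the unique-maximum property, some outer vertex `a i` receives color `4`. -/
theorem stmt_7 (a b : Fin 4 → ℕ)
    (ha : ∀ i, 1 ≤ a i ∧ a i ≤ 4) (hb : ∀ i, 1 ≤ b i ∧ b i ≤ 4)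
    (paa : ∀ i, a i ≠ a (i + 1)) (pbb : ∀ i, b i ≠ b (i + 1))
    (pab : ∀ i, a i ≠ b i) (pba : ∀ i, b i ≠ a (i + 1))
    (tri1 : ∀ i, UM3 (a i) (b i) (a (i + 1)))
    (tri2 : ∀ i, UM3 (b i) (a (i + 1)) (b (i + 1)))
    (quad : UM4 (b 0) (b 1) (b 2) (b 3)) :
    ∃ i, a i = 4 := by
  by_contra h
  push_neg at h
  have e0 : (0:Fin 4) + 1 = 1 := rfl
  have e1 : (1:Fin 4) + 1 = 2 := rfl
  have e2 : (2:Fin 4) + 1 = 3 := rfl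
  have e3 : (3:Fin 4) + 1 = 0 := rfl
  have ha0 := ha 0
  have ha1 := ha 1
  have ha2 := ha 2
  have ha3 := ha 3
  have hb0 := hb 0
  have hb1 := hb 1
  have hb2 := hb 2
  have hb3 := hb 3
  have paa0 := paa 0
  have paa1 := paa 1
  have paa2 := paa 2
  have paa3 := paa 3
  have pbb0 := pbb 0
  have pbb1 := pbb 1
  have pbb2 := pbb 2
  have pbb3 := pbb 3
  have pab0 := pab 0
  have pab1 := pab 1
  have pab2 := pab 2
  have pab3 := pab 3
  have pba0 := pba 0
  have pba1 := pba 1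
  have pba2 := pba 2
  have pba3 := pba 3
  have tri10 := tri1 0
  have tri11 := tri1 1
  have tri12 := tri1 2
  have tri13 := tri1 3
  have tri20 := tri2 0
  have tri21 := tri2 1
  have tri22 := tri2 2
  have tri23 := tri2 3
  have h0 := h 0
  have h1 := h 1
  have h2 := h 2
  have h3 := h 3
  clear ha hb paa pbb pab pba tri1 tri2 h
  simp only [e0, e1, e2, e3, UM3, UM4, UM4] at quad ha0 ha1 ha2 ha3 hb0 hb1 hb2 hb3 paa0 paa1 paa2 paa3 pbb0 pbb1 pbb2 pbb3 pab0 pab1 pab2 pab3 pba0 pba1 pba2 pba3 tri10 tri11 tri12 tri13 tri20 tri21 tri22 tri23 h0 h1 h2 h3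
  omega
end

section
/- The graph G formed by two copies H and H' of the 8-vertex gadget joined by an edge a4 a2' is planar and admits a proper coloring with colors in {1,2,3,4,5} such that every face has the unique-maximum property; hence the facial unique-maximum chromatic number of G equals exactly 5. -/
/-- A FUM-coloring of `G` (two copies of `H` joined by the edge `a 3 — a' 1`) with
colors bounded by `n`: proper, all bounded faces of both copies and the outer face
have the unique-maximum property. -/
def FUMColoringG (n : ℕ) (a b a' b' : Fin 4 → ℕ) : Prop :=
  (∀ i, 1 ≤ a i ∧ a i ≤ n) ∧ (∀ i, 1 ≤ b i ∧ b i ≤ n) ∧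
  (∀ i, 1 ≤ a' i ∧ a' i ≤ n) ∧ (∀ i, 1 ≤ b' i ∧ b' i ≤ n) ∧
  GadgetOK a b ∧ GadgetOK a' b' ∧
  a 3 ≠ a' 1 ∧
  UMList [a 0, a 1, a 2, a 3, a' 0, a' 1, a' 2, a' 3]

instance (x y z : ℕ) : Decidable (UM3 x y z) := by unfold UM3; infer_instance
instance (w x y z : ℕ) : Decidable (UM4 w x y z) := by unfold UM4; infer_instance
instance (l : List ℕ) : Decidable (UMList l) := by unfold UMList; infer_instance
instance (a b : Fin 4 → ℕ) : Decidable (GadgetOK a b) := by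
  unfold GadgetOK; infer_instance
instance (n : ℕ) (a b a' b' : Fin 4 → ℕ) : Decidable (FUMColoringG n a b a' b') := by
  unfold FUMColoringG; infer_instance

set_option maxHeartbeats 8000000 in
/-- In any valid 4-coloring of the gadget, the color 4 appears on the outer cycle. -/
theorem gadget_key : ∀ a0 a1 a2 a3 b0 b1 b2 b3 : Fin 4,
    GadgetOK ![a0.val+1, a1.val+1, a2.val+1, a3.val+1]
             ![b0.val+1, b1.val+1, b2.val+1, b3.val+1] →
    (a0.val+1 = 4 ∨ a1.val+1 = 4 ∨ a2.val+1 = 4 ∨ a3.val+1 = 4) := by decide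

theorem gadget_has4 (a b : Fin 4 → ℕ) (ha : ∀ i, 1 ≤ a i ∧ a i ≤ 4)
    (hb : ∀ i, 1 ≤ b i ∧ b i ≤ 4) (hg : GadgetOK a b) :
    a 0 = 4 ∨ a 1 = 4 ∨ a 2 = 4 ∨ a 3 = 4 := by
  have hA : ∀ i, ∃ x : Fin 4, a i = x.val + 1 := fun i =>
    ⟨⟨a i - 1, by have := ha i; omega⟩, by have := ha i; simp; omega⟩
  have hB : ∀ i, ∃ x : Fin 4, b i = x.val + 1 := fun i =>
    ⟨⟨b i - 1, by have := hb i; omega⟩, by have := hb i; simp; omega⟩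
  choose A hAe using hA
  choose B hBe using hB
  have ea : a = ![(A 0).val+1, (A 1).val+1, (A 2).val+1, (A 3).val+1] := by
    funext i; fin_cases i <;> simp [hAe]
  have eb : b = ![(B 0).val+1, (B 1).val+1, (B 2).val+1, (B 3).val+1] := by
    funext i; fin_cases i <;> simp [hBe]
  rw [ea, eb] at hg
  have := gadget_key (A 0) (A 1) (A 2) (A 3) (B 0) (B 1) (B 2) (B 3) hg
  rw [hAe 0, hAe 1, hAe 2, hAe 3]
  exact this

theorem no_two_maxes (l : List ℕ) (h4 : ∀ w ∈ l, w ≤ 4) (hc : 2 ≤ l.count 4) :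
    ¬ UMList l := by
  intro h
  unfold UMList at h
  have hsub : List.Sublist (l.filter (· == 4))
      (l.filter (fun v => decide (∀ w ∈ l, w ≤ v))) := by
    apply List.monotone_filter_right
    intro x hx
    simp at hx ⊢
    subst hx
    exact h4
  have hle := hsub.length_le
  rw [List.count, List.countP_eq_length_filter] at hc
  omega

/-- `G` admits a FUM-coloring with colors in `{1,…,5}` but none with colors in
`{1,…,4}`; hence its facial unique-maximum chromatic number is exactly `5`. -/
theorem stmt_8 :
    (∃ a b a' b' : Fin 4 → ℕ, FUMColoringG 5 a b a' b') ∧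
    ¬ (∃ a b a' b' : Fin 4 → ℕ, FUMColoringG 4 a b a' b') := by
  constructor
  · exact ⟨![1,2,1,2], ![3,4,3,5], ![1,3,1,2], ![2,4,3,5], by decide⟩
  · rintro ⟨a, b, a', b', ha, hb, ha', hb', hg, hg', hne, hum⟩
    have h1 := gadget_has4 a b ha hb hg
    have h2 := gadget_has4 a' b' ha' hb' hg'
    set l : List ℕ := [a 0, a 1, a 2, a 3, a' 0, a' 1, a' 2, a' 3] with hl
    have h4 : ∀ w ∈ l, w ≤ 4 := by
      intro w hw
      simp [hl] at hw
      rcases hw with h|h|h|h|h|h|h|h <;> subst h <;>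
        first
          | exact (ha 0).2 | exact (ha 1).2 | exact (ha 2).2 | exact (ha 3).2
          | exact (ha' 0).2 | exact (ha' 1).2 | exact (ha' 2).2 | exact (ha' 3).2
    have hc : 2 ≤ l.count 4 := by
      have e : l = [a 0, a 1, a 2, a 3] ++ [a' 0, a' 1, a' 2, a' 3] := rfl
      rw [e, List.count_append]
      have m1 : (4:ℕ) ∈ [a 0, a 1, a 2, a 3] := by
        rcases h1 with h|h|h|h <;> simp [← h]
      have m2 : (4:ℕ) ∈ [a' 0, a' 1, a' 2, a' 3] := by
        rcases h2 with h|h|h|h <;> simp [← h]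
      have c1 := List.count_pos_iff.mpr m1
      have c2 := List.count_pos_iff.mpr m2
      omega
    exact no_two_maxes l h4 hc hum
end

section
/- In the generalized gadget H_k (k ≥ 1), suppose c is a coloring with values in {1,2,3} of all vertices a_1,...,a_{3k+1}, b_1,...,b_{3k+1} except that one designated vertex b_{3k+1} may take value 4, such that c is proper and every triangle {a_i,b_i,a_{i+1}} and {b_i,a_{i+1},b_{i+1}} whose vertices all have colors in {1,2,3} has the unique-maximum property. Then the colors of the triple (a_i, b_i, a_{i+1}) determine the colors of (a_{i+1}, b_{i+1}, a_{i+2}) by the cyclic shift (x,y,z) ↦ (z,x,y), for all i such that the relevant vertices avoid color 4; consequently no such coloring exists. -/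
/-!
With colors in `{1,2,3}`, a proper coloring uses all three colors on each of the triangles
`a i, b i, a (i+1)` and `b i, a (i+1), b (i+1)`, so `b (i+1) = a i` and `a (i+2) = b i`. Hence the
outer cycle is `3`-periodic wherever the inner vertices avoid color `4`. Only `b (3k)` may carry
`4`, so `a (3k) = a 0`, which contradicts properness on the outer edge `a (3k) a 0`, the cycle
having length `3k + 1`.
-/

theorem third_color_unique {x y z w : ℕ} (hx : 1 ≤ x ∧ x ≤ 3) (hy : 1 ≤ y ∧ y ≤ 3)
    (hz : 1 ≤ z ∧ z ≤ 3) (hw : 1 ≤ w ∧ w ≤ 3) (hxy : x ≠ y) (hxz : x ≠ z) (hyz : y ≠ z)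
    (hwy : w ≠ y) (hwz : w ≠ z) : w = x := by
  omega

structure IsProperGadgetColoring {n : ℕ} [NeZero n] (a b : Fin n → ℕ) : Prop where
  outer : ∀ i, a i ≠ a (i + 1)
  inner : ∀ i, b i ≠ b (i + 1)
  spoke : ∀ i, a i ≠ b i
  diagonal : ∀ i, b i ≠ a (i + 1)

namespace IsProperGadgetColoring

open Fin.CommRing

variable {n : ℕ} [NeZero n] {a b : Fin n → ℕ}

theorem shift (hc : IsProperGadgetColoring a b) (ha : ∀ i, 1 ≤ a i ∧ a i ≤ 3)
    (hb : ∀ i, 1 ≤ b i) {i : Fin n} (hbi : b i ≤ 3) (hbi' : b (i + 1) ≤ 3) :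
    b (i + 1) = a i ∧ a (i + 2) = b i := by
  have h2 : i + 2 = i + 1 + 1 := by ring
  refine ⟨third_color_unique (ha i) ⟨hb i, hbi⟩ (ha (i + 1)) ⟨hb _, hbi'⟩ (hc.spoke i)
    (hc.outer i) (hc.diagonal i) (hc.inner i).symm (hc.spoke (i + 1)).symm, ?_⟩
  rw [h2]
  exact third_color_unique ⟨hb i, hbi⟩ (ha (i + 1)) ⟨hb _, hbi'⟩ (ha _) (hc.diagonal i)
    (hc.inner i) (hc.spoke (i + 1)) (hc.outer (i + 1)).symm (hc.diagonal (i + 1)).symm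

theorem outer_add_three (hc : IsProperGadgetColoring a b) (ha : ∀ i, 1 ≤ a i ∧ a i ≤ 3)
    (hb : ∀ i, 1 ≤ b i) {i : Fin n} (hb₀ : b i ≤ 3) (hb₁ : b (i + 1) ≤ 3)
    (hb₂ : b (i + 2) ≤ 3) : a (i + 3) = a i := by
  have h3 : i + 3 = i + 1 + 2 := by ring
  have hb₂' : b (i + 1 + 1) ≤ 3 := by rwa [add_assoc, one_add_one_eq_two]
  rw [h3, (hc.shift ha hb hb₁ hb₂').2, (hc.shift ha hb hb₀ hb₁).1]

theorem outer_three_mul (hc : IsProperGadgetColoring a b) (ha : ∀ i, 1 ≤ a i ∧ a i ≤ 3)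
    (hb : ∀ i, 1 ≤ b i) (m : ℕ) (hb₃ : ∀ j < 3 * m, b j ≤ 3) : a (3 * m : ℕ) = a 0 := by
  induction m with
  | zero => simp
  | succ m ih =>
    have hcast : ((3 * (m + 1) : ℕ) : Fin n) = ((3 * m : ℕ) : Fin n) + 3 := by push_cast; ring
    rw [hcast, hc.outer_add_three ha hb (hb₃ _ (by omega))
      (by exact_mod_cast hb₃ (3 * m + 1) (by omega))
      (by exact_mod_cast hb₃ (3 * m + 2) (by omega)), ih fun j hj => hb₃ j (by omega)]

theorem false_of_length_three_mul_add_one {k : ℕ} {a b : Fin (3 * k + 1) → ℕ}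
    (hc : IsProperGadgetColoring a b) (ha : ∀ i, 1 ≤ a i ∧ a i ≤ 3) (hb : ∀ i, 1 ≤ b i)
    (hb₃ : ∀ i : Fin (3 * k + 1), (i : ℕ) < 3 * k → b i ≤ 3) : False := by
  have hb₃' : ∀ j < 3 * k, b j ≤ 3 := fun j hj =>
    hb₃ j (by rwa [Fin.val_natCast, Nat.mod_eq_of_lt (by omega)])
  have hwrap : ((3 * k : ℕ) : Fin (3 * k + 1)) + 1 = 0 := by
    rw [← Nat.cast_succ, Fin.natCast_self]
  apply hc.outer (3 * k : ℕ)
  rw [hwrap, hc.outer_three_mul ha hb k hb₃']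

end IsProperGadgetColoring

/-- In the generalized gadget `H k`, suppose all vertices get colors in `{1,2,3}` except
the designated vertex `b (3k)` (the last inner vertex), which may also get `4`; the
coloring is proper, and every triangle all of whose vertices have colors in `{1,2,3}`
has the unique-maximum property. Then the colors of `(a i, b i, a (i+1))` determine those
of `(a (i+1), b (i+1), a (i+2))` by the cyclic shift `(x,y,z) ↦ (z,x,y)` whenever the
relevant vertices avoid color `4`; consequently no such coloring exists. -/
theorem stmt_11 (k : ℕ) (a b : Fin (3 * k + 1) → ℕ)
    (ha : ∀ i, 1 ≤ a i ∧ a i ≤ 3)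
    (hb : ∀ i, 1 ≤ b i ∧ b i ≤ 3 ∨ (i = (⟨3 * k, by omega⟩ : Fin (3 * k + 1)) ∧ 1 ≤ b i ∧ b i ≤ 4))
    (paa : ∀ i, a i ≠ a (i + 1)) (pbb : ∀ i, b i ≠ b (i + 1))
    (pab : ∀ i, a i ≠ b i) (pba : ∀ i, b i ≠ a (i + 1)) :
    (∀ i, a i ≤ 3 → b i ≤ 3 → a (i + 1) ≤ 3 → b (i + 1) ≤ 3 → a (i + 2) ≤ 3 →
      b (i + 1) = a i ∧ a (i + 2) = b i) ∧
    False := by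
  have hc : IsProperGadgetColoring a b := ⟨paa, pbb, pab, pba⟩
  have hb_pos : ∀ i, 1 ≤ b i := fun i => by rcases hb i with h | h <;> omega
  have hb_le : ∀ i : Fin (3 * k + 1), (i : ℕ) < 3 * k → b i ≤ 3 := fun i hi =>
    ((hb i).resolve_right fun ⟨h, _⟩ => by simp [h] at hi).2
  exact ⟨fun i _ hbi _ hbi' _ => hc.shift ha hb_pos hbi hbi',
    hc.false_of_length_three_mul_add_one ha hb_pos hb_le⟩
end
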